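/- arXiv:1107.5187 — 4 statements merged into one kernel-verified Lean document; each statement's English description precedes it below -/
import Mathlib

section
/- Let R be a commutative unital complex semisimple Banach algebra and A an n×n matrix with entries in R. Then a complex number λ belongs to the spectrum of A (as an element of the Banach algebra of n×n matrices over R) if and only if λ belongs to the spectrum of the complex matrix Â(φ) obtained by applying the character φ entrywise to A, for some character φ of R. -/
/-!
A matrix over a commutative ring is invertible iff its determinant is, and characters commute
with determinants: `φ (det (λ - A)) = det (λ - Â(φ))`. So `λ ∈ σ(Â(φ))` exactly when the
character `φ` kills `det (λ - A)`. In a commutative complex Banach algebra an element is a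
non-unit iff some character kills it (Gelfand–Mazur), which gives both directions.
-/

open WeakDual

namespace Matrix

variable {m S A B : Type*} [Fintype m] [DecidableEq m] [CommRing S]

section AlgHom

variable [CommRing A] [CommRing B] [Algebra S A] [Algebra S B]
  {F : Type*} [FunLike F A B] [AlgHomClass F S A B]

theorem mem_spectrum_iff_not_isUnit_det {M : Matrix m m A} {r : S} :
    r ∈ spectrum S M ↔ ¬IsUnit (algebraMap S (Matrix m m A) r - M).det := by
  rw [spectrum.mem_iff, isUnit_iff_isUnit_det]

theorem spectrum_map_subset (φ : F) (M : Matrix m m A) :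
    spectrum S (M.map φ) ⊆ spectrum S M :=
  AlgHom.spectrum_apply_subset (AlgHomClass.toAlgHom φ).mapMatrix M

theorem det_algebraMap_sub_map (φ : F) (M : Matrix m m A) (r : S) :
    (algebraMap S (Matrix m m B) r - M.map φ).det = φ (algebraMap S (Matrix m m A) r - M).det := by
  have hmap : algebraMap S (Matrix m m B) r - M.map φ =
      (AlgHomClass.toAlgHom φ).mapMatrix (algebraMap S (Matrix m m A) r - M) := by
    rw [map_sub, AlgHom.commutes]
    rfl
  rw [hmap, ← AlgHom.map_det]
  rfl

end AlgHom

theorem exists_character_mem_spectrum_map {R : Type*} [NormedCommRing R] [NormedAlgebra ℂ R]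
    [CompleteSpace R] {M : Matrix m m R} {z : ℂ} (hz : z ∈ spectrum ℂ M) :
    ∃ φ : characterSpace ℂ R, z ∈ spectrum ℂ (M.map φ) := by
  obtain ⟨φ, hφ⟩ := CharacterSpace.exists_apply_eq_zero (mem_spectrum_iff_not_isUnit_det.mp hz)
  refine ⟨φ, mem_spectrum_iff_not_isUnit_det.mpr ?_⟩
  rw [det_algebraMap_sub_map, hφ]
  exact not_isUnit_zero

end Matrix

theorem spectrum_matrix_iff_exists_character_general
    {R : Type*} [NormedCommRing R] [NormedAlgebra ℂ R] [CompleteSpace R]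
    {n : ℕ} (A : Matrix (Fin n) (Fin n) R) (lam : ℂ) :
    lam ∈ spectrum ℂ A ↔
      ∃ φ : characterSpace ℂ R, lam ∈ spectrum ℂ (A.map fun x => φ x) :=
  ⟨Matrix.exists_character_mem_spectrum_map,
    fun ⟨φ, hφ⟩ => Matrix.spectrum_map_subset φ A hφ⟩

/-- For a commutative unital complex semisimple Banach algebra `R` and
`A ∈ R^{n×n}`, `λ` is in the spectrum of `A` in the matrix algebra iff `λ` is in the
spectrum of the complex matrix `Â(φ)` for some character `φ` of `R`. -/
theorem spectrum_matrix_iff_exists_character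
    {R : Type*} [NormedCommRing R] [NormedAlgebra ℂ R] [CompleteSpace R] [Nontrivial R]
    (hss : ∀ x : R, (∀ φ : characterSpace ℂ R, φ x = 0) → x = 0)
    {n : ℕ} (A : Matrix (Fin n) (Fin n) R) (lam : ℂ) :
    lam ∈ spectrum ℂ A ↔
      ∃ φ : characterSpace ℂ R, lam ∈ spectrum ℂ (A.map fun x => φ x) :=
  spectrum_matrix_iff_exists_character_general A lam
end

section
/- Let R be a commutative unital complex semisimple Banach algebra and A an n×n matrix with entries in R. Then λ is in the spectrum of A as an element of the Banach algebra R^{n×n} if and only if λ is in the spectrum of the multiplication operator M_A : R^n → R^n, v ↦ Av, as a bounded linear operator on the Banach space R^n. -/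
/-!
The map `A ↦ M_A` is an algebra homomorphism from `R^{n×n}` to the bounded operators on `R^n`,
and it sends `λ - A` to `λ - M_A`. Hence invertibility of `λ - A` gives that of `λ - M_A`.
Conversely, if `λ - M_A` is invertible then multiplication by the square matrix `λ - A` is
surjective, and over a commutative ring this already forces the matrix to be invertible.
-/

namespace Matrix

variable (𝕜 ι R : Type*) [CommRing 𝕜] [CommRing R] [TopologicalSpace R] [IsTopologicalRing R]
  [Algebra 𝕜 R] [Fintype ι] [DecidableEq ι]

def mulVecCLM : Matrix ι ι R →ₐ[𝕜] (ι → R) →L[𝕜] (ι → R) where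
  toFun A := ⟨A.mulVecLin.restrictScalars 𝕜, continuous_const.matrix_mulVec continuous_id⟩
  map_one' := by ext : 1; exact one_mulVec _
  map_mul' A B := by ext v : 1; exact (mulVec_mulVec v A B).symm
  map_zero' := by ext : 1; exact zero_mulVec _
  map_add' A B := by ext v : 1; exact add_mulVec A B v
  commutes' c := by ext v : 1; simp [Algebra.algebraMap_eq_smul_one]

variable {𝕜 ι R}

theorem isUnit_mulVecCLM_iff {A : Matrix ι ι R} : IsUnit (mulVecCLM 𝕜 ι R A) ↔ IsUnit A := by
  refine ⟨fun h => mulVec_surjective_iff_isUnit.mp ?_, fun h => h.map _⟩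
  exact ((Module.End.isUnit_iff _).mp (h.map ContinuousLinearMap.toLinearMapRingHom)).surjective

theorem spectrum_mulVecCLM (A : Matrix ι ι R) : spectrum 𝕜 (mulVecCLM 𝕜 ι R A) = spectrum 𝕜 A := by
  ext c
  rw [spectrum.mem_iff, spectrum.mem_iff, ← AlgHom.commutes (mulVecCLM 𝕜 ι R), ← map_sub,
    isUnit_mulVecCLM_iff]

end Matrix

theorem spectrum_matrix_eq_spectrum_mulVec_general
    {R : Type*} [NormedCommRing R] [NormedAlgebra ℂ R]
    {n : ℕ} (A : Matrix (Fin n) (Fin n) R)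
    (T : (Fin n → R) →L[ℂ] (Fin n → R)) (hT : ∀ v, T v = A.mulVec v) (lam : ℂ) :
    lam ∈ spectrum ℂ A ↔ lam ∈ spectrum ℂ T := by
  obtain rfl : T = Matrix.mulVecCLM ℂ (Fin n) R A := ContinuousLinearMap.ext hT
  rw [Matrix.spectrum_mulVecCLM]

/-- For a commutative unital complex Banach algebra `R` (semisimple in the
paper, though not needed to state the claim) and `A ∈ R^{n×n}`, the spectrum of `A` in
the matrix algebra `R^{n×n}` coincides with the spectrum of the bounded multiplication
operator `M_A : R^n → R^n`, `v ↦ Av`, where `R^n` carries the sup norm. -/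
theorem spectrum_matrix_eq_spectrum_mulVec
    {R : Type*} [NormedCommRing R] [NormedAlgebra ℂ R] [CompleteSpace R] [Nontrivial R]
    (hss : ∀ x : R, (∀ φ : WeakDual.characterSpace ℂ R, φ x = 0) → x = 0)
    {n : ℕ} (A : Matrix (Fin n) (Fin n) R)
    (T : (Fin n → R) →L[ℂ] (Fin n → R)) (hT : ∀ v, T v = A.mulVec v) (lam : ℂ) :
    lam ∈ spectrum ℂ A ↔ lam ∈ spectrum ℂ T :=
  spectrum_matrix_eq_spectrum_mulVec_general A T hT lam
end

section
/- Let R be a commutative unital complex semisimple Banach algebra and A ∈ R^{n×n}. Then A is exponentially stable (there exist C > 0 and ε > 0 with ‖e^{tA}‖ ≤ C e^{−εt} for all t ≥ 0) if and only if sup{Re λ : λ is an eigenvalue of Â(φ) for some character φ of R} < 0. -/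
/-!
Both directions go through the spectrum of `A` in the Banach algebra `R^{n×n}`, which is the union
over the characters `φ` of the spectra of `Â(φ)`: `det (z - A)` is a unit in `R` iff no character
kills it. If `‖e^{tA}‖ ≤ C e^{-εt}` and `λ ∈ σ(A)`, then `e^{tλ} ∈ σ(e^{tA})` gives
`e^{t Re λ} ≤ C ‖1‖ e^{-εt}` for all `t > 0`, so `Re λ ≤ -ε`. Conversely, `φ(e^A) = e^{Â(φ)}` and
spectral mapping for complex matrices put `σ(e^A)` in the disc of radius `e^σ < 1`; Gelfand's
formula then bounds `‖e^{kA}‖` by `C r^k` with `r < 1`, and the boundedness of `e^{sA}` for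
`s ∈ [0, 1]` fills in the non-integer times.
-/

open WeakDual NormedSpace
open scoped NNReal ENNReal

attribute [local instance] Matrix.linftyOpNormedRing Matrix.linftyOpNormedAlgebra

theorem nonpos_of_forall_pos_exp_mul_le {c D : ℝ} (h : ∀ t > 0, Real.exp (c * t) ≤ D) :
    c ≤ 0 := by
  by_contra! hc
  have ht : 0 < (|D| + 1) / c := by positivity
  have h1 := Real.add_one_le_exp (c * ((|D| + 1) / c))
  have h2 := h _ ht
  rw [mul_div_cancel₀ _ hc.ne'] at h1 h2
  linarith [le_abs_self D]

section BanachAlgebra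

variable {𝔸 : Type*} [NormedRing 𝔸] [NormedAlgebra ℂ 𝔸]

def ExponentiallyStable (a : 𝔸) : Prop :=
  ∃ C > (0 : ℝ), ∃ ε > (0 : ℝ), ∀ t : ℝ, 0 ≤ t → ‖exp ((t : ℂ) • a)‖ ≤ C * Real.exp (-ε * t)

variable [CompleteSpace 𝔸]

theorem continuous_exp_ofReal_smul (a : 𝔸) : Continuous fun t : ℝ => exp ((t : ℂ) • a) :=
  let : NormedAlgebra ℚ 𝔸 := .restrictScalars ℚ ℂ 𝔸
  exp_continuous.comp (Complex.continuous_ofReal.smul continuous_const)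

theorem exp_ofReal_smul_add (a : 𝔸) (s t : ℝ) :
    exp (((s + t : ℝ) : ℂ) • a) = exp ((s : ℂ) • a) * exp ((t : ℂ) • a) := by
  let : NormedAlgebra ℚ 𝔸 := .restrictScalars ℚ ℂ 𝔸
  rw [Complex.ofReal_add, add_smul]
  exact exp_add_of_commute (((Commute.refl a).smul_left _).smul_right _)

theorem exp_natCast_smul (a : 𝔸) (k : ℕ) : exp (((k : ℝ) : ℂ) • a) = exp a ^ k := by
  let : NormedAlgebra ℚ 𝔸 := .restrictScalars ℚ ℂ 𝔸
  rw [Complex.ofReal_natCast, Nat.cast_smul_eq_nsmul, exp_nsmul]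

-- `exp (t • a) = exp a ^ ⌊t⌋ * exp ((t - ⌊t⌋) • a)`, and the second factor is bounded.
theorem exists_norm_exp_smul_le_of_norm_exp_pow_le {a : 𝔸} {C ω : ℝ}
    (h : ∀ k : ℕ, ‖exp a ^ k‖ ≤ C * Real.exp (ω * k)) :
    ∃ C', ∀ t : ℝ, 0 ≤ t → ‖exp ((t : ℂ) • a)‖ ≤ C' * Real.exp (ω * t) := by
  obtain ⟨M, hM⟩ := (isCompact_Icc (a := (0 : ℝ)) (b := 1)).exists_bound_of_continuousOn
    (continuous_exp_ofReal_smul a).continuousOn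
  have hC : 0 ≤ C := by simpa using (norm_nonneg _).trans (h 0)
  have hM0 : 0 ≤ M := (norm_nonneg _).trans (hM 0 (by simp))
  refine ⟨C * Real.exp |ω| * M, fun t ht => ?_⟩
  set k := ⌊t⌋₊
  have hs : t - k ∈ Set.Icc (0 : ℝ) 1 :=
    ⟨sub_nonneg.2 (Nat.floor_le ht), by linarith [Nat.lt_floor_add_one t]⟩
  have hωk : ω * k ≤ |ω| + ω * t := by
    have : |ω * (t - k)| ≤ |ω| := by
      rw [abs_mul, abs_of_nonneg hs.1]
      exact mul_le_of_le_one_right (abs_nonneg ω) hs.2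
    linarith [neg_le_abs (ω * (t - k))]
  calc ‖exp ((t : ℂ) • a)‖ = ‖exp a ^ k * exp (((t - k : ℝ) : ℂ) • a)‖ := by
        rw [← exp_natCast_smul, ← exp_ofReal_smul_add, add_sub_cancel]
    _ ≤ C * Real.exp (ω * k) * M := by
        refine (norm_mul_le _ _).trans (mul_le_mul (h k) (hM _ hs) (norm_nonneg _) (by positivity))
    _ ≤ C * Real.exp (|ω| + ω * t) * M := by gcongr
    _ = C * Real.exp |ω| * M * Real.exp (ω * t) := by rw [Real.exp_add]; ring

theorem ExponentiallyStable.exists_re_le {a : 𝔸} (ha : ExponentiallyStable a) :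
    ∃ σ < (0 : ℝ), ∀ z ∈ spectrum ℂ a, z.re ≤ σ := by
  obtain ⟨C, -, ε, hε, hC⟩ := ha
  refine ⟨-ε, neg_lt_zero.2 hε, fun z hz => ?_⟩
  suffices ∀ t > 0, Real.exp ((z.re + ε) * t) ≤ C * ‖(1 : 𝔸)‖ by
    linarith [nonpos_of_forall_pos_exp_mul_le this]
  intro t ht
  have hmem : Complex.exp (t * z) ∈ spectrum ℂ (exp ((t : ℂ) • a)) := by
    rw [Complex.exp_eq_exp_ℂ]
    refine spectrum.exp_mem_exp _ ?_
    exact spectrum.smul_mem_smul_iff (r := Units.mk0 (t : ℂ) (by exact_mod_cast ht.ne')) |>.2 hz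
  calc Real.exp ((z.re + ε) * t) = ‖Complex.exp (t * z)‖ * Real.exp (ε * t) := by
        rw [Complex.norm_exp, ← Real.exp_add, Complex.re_ofReal_mul]; ring_nf
    _ ≤ C * Real.exp (-ε * t) * ‖(1 : 𝔸)‖ * Real.exp (ε * t) := by
        gcongr
        exact (spectrum.norm_le_norm_mul_of_mem hmem).trans (by gcongr; exact hC t ht.le)
    _ = C * ‖(1 : 𝔸)‖ := by
        rw [mul_right_comm, mul_assoc C, ← Real.exp_add]; simp

open Filter Asymptotics in
theorem exists_norm_pow_le_mul_pow_of_spectralRadius_lt {a : 𝔸} {r : ℝ≥0}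
    (h : spectralRadius ℂ a < r) : ∃ C, ∀ k : ℕ, ‖a ^ k‖ ≤ C * r ^ k := by
  have hr : 0 < r := ENNReal.coe_pos.mp (pos_of_gt h)
  have hev : ∀ᶠ k : ℕ in atTop, ‖a ^ k‖ ≤ r ^ k := by
    filter_upwards [(spectrum.gelfand_formula a).eventually_lt_const h, eventually_gt_atTop 0]
      with k hk hk0
    rw [one_div, ENNReal.rpow_inv_lt_iff (by positivity), ENNReal.rpow_natCast] at hk
    exact_mod_cast hk.le
  have hO : (fun k : ℕ => ‖a ^ k‖) =O[cofinite] fun k => (r : ℝ) ^ k := by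
    rw [Nat.cofinite_eq_atTop]
    exact IsBigO.of_bound 1 (by simpa using hev)
  obtain ⟨C, hC⟩ := (isBigO_cofinite_iff fun k hk => absurd hk (by positivity)).mp hO
  exact ⟨C, fun k => by simpa using hC k⟩

theorem exponentiallyStable_of_spectralRadius_exp_lt_one {a : 𝔸}
    (ha : spectralRadius ℂ (exp a) < 1) : ExponentiallyStable a := by
  obtain ⟨r, hr, hr1⟩ := ENNReal.lt_iff_exists_nnreal_btwn.1 ha
  have hr0 : 0 < (r : ℝ) := ENNReal.coe_pos.mp (pos_of_gt hr)
  have hr1' : (r : ℝ) < 1 := by exact_mod_cast hr1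
  obtain ⟨C, hC⟩ := exists_norm_pow_le_mul_pow_of_spectralRadius_lt hr
  obtain ⟨C', hC'⟩ := exists_norm_exp_smul_le_of_norm_exp_pow_le (a := a) (C := C) (ω := Real.log r)
    fun k => by rw [Real.exp_mul, Real.exp_log hr0, Real.rpow_natCast]; exact_mod_cast hC k
  refine ⟨max C' 1, by positivity, -Real.log r, neg_pos.2 (Real.log_neg hr0 hr1'), fun t ht => ?_⟩
  rw [neg_neg]
  exact (hC' t ht).trans (by gcongr; exact le_max_left _ _)

end BanachAlgebra

theorem Module.End.exists_hasEigenvector_of_commute {K V : Type*} [Field K] [IsAlgClosed K]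
    [AddCommGroup V] [Module K V] [FiniteDimensional K V] {f g : Module.End K V}
    (hfg : Commute f g) {μ : K} (hμ : g.HasEigenvalue μ) :
    ∃ c v, f.HasEigenvector c v ∧ g.HasEigenvector μ v := by
  have hmaps : Set.MapsTo f (g.eigenspace μ) (g.eigenspace μ) :=
    Module.End.mapsTo_genEigenspace_of_comm hfg.symm μ 1
  have : Nontrivial (g.eigenspace μ) := Submodule.nontrivial_iff_ne_bot.2 hμ
  obtain ⟨c, hc⟩ := Module.End.exists_eigenvalue (f.restrict hmaps)
  obtain ⟨w, hw⟩ := hc.exists_hasEigenvector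
  have hw0 : (w : V) ≠ 0 := by simpa using hw.2
  exact ⟨c, w, ⟨Module.End.mem_eigenspace_iff.2 (congrArg Subtype.val hw.apply_eq_smul), hw0⟩,
    w.2, hw0⟩

namespace Matrix

variable {ι : Type*} [Fintype ι] [DecidableEq ι]

theorem exp_mulVec_of_mulVec_eq_smul {M : Matrix ι ι ℂ} {c : ℂ} {v : ι → ℂ}
    (hv : M *ᵥ v = c • v) : exp M *ᵥ v = Complex.exp c • v := by
  have hpow : ∀ k : ℕ, (M ^ k) *ᵥ v = c ^ k • v := by
    intro k
    induction k with
    | zero => simp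
    | succ k ih => rw [pow_succ, ← mulVec_mulVec, hv, mulVec_smul, ih, smul_smul, pow_succ']
  let L : Matrix ι ι ℂ →+ (ι → ℂ) := AddMonoidHom.mk' (· *ᵥ v) fun X Y => add_mulVec X Y v
  have hM := (exp_series_hasSum_exp' (𝕂 := ℂ) M).map L
    (continuous_id.matrix_mulVec continuous_const)
  have hc := (exp_series_hasSum_exp' (𝕂 := ℂ) c).smul_const v
  simp only [L, AddMonoidHom.mk'_apply, Function.comp_def, smul_mulVec, hpow, smul_smul] at hM
  rw [Complex.exp_eq_exp_ℂ]
  exact hM.unique (by simpa [smul_eq_mul] using hc)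

theorem spectrum_exp_subset (M : Matrix ι ι ℂ) :
    spectrum ℂ (exp M) ⊆ Complex.exp '' spectrum ℂ M := by
  intro μ hμ
  rw [← spectrum_toLin', ← Module.End.hasEigenvalue_iff_mem_spectrum] at hμ
  have hcomm : Commute (toLin' M) (toLin' (exp M)) :=
    (Commute.refl M).exp_right.map toLinAlgEquiv'
  obtain ⟨c, v, hMv, hexpv⟩ := Module.End.exists_hasEigenvector_of_commute hcomm hμ
  have hMv' : M *ᵥ v = c • v := by simpa using hMv.apply_eq_smul
  have hexpv' : exp M *ᵥ v = μ • v := by simpa using hexpv.apply_eq_smul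
  refine ⟨c, ?_, smul_left_injective ℂ hMv.2 ?_⟩
  · rw [← spectrum_toLin', ← Module.End.hasEigenvalue_iff_mem_spectrum]
    exact Module.End.hasEigenvalue_of_hasEigenvector hMv
  · change Complex.exp c • v = μ • v
    rw [← hexpv', exp_mulVec_of_mulVec_eq_smul hMv']

-- The `L∞`-operator norm induces the product uniformity, but not at instance transparency.
instance linftyOp_completeSpace {m n α : Type*} [Fintype m] [Fintype n] [NormedAddCommGroup α]
    [CompleteSpace α] :
    @CompleteSpace (Matrix m n α) Matrix.linftyOpNormedAddCommGroup.toUniformSpace :=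
  inferInstanceAs (CompleteSpace (m → n → α))

variable {R : Type*} [NormedCommRing R] [NormedAlgebra ℂ R] [CompleteSpace R]

theorem map_exp_characterSpace (φ : characterSpace ℂ R) (X : Matrix ι ι R) :
    (exp X).map φ = exp (X.map φ) := by
  let : NormedAlgebra ℚ (Matrix ι ι R) := .restrictScalars ℚ ℂ _
  exact map_exp (CharacterSpace.equivAlgHom φ).mapMatrix
    (continuous_id.matrix_map (map_continuous φ)) X

theorem mem_spectrum_iff_exists_characterSpace (A : Matrix ι ι R) (z : ℂ) :
    z ∈ spectrum ℂ A ↔ ∃ φ : characterSpace ℂ R, z ∈ spectrum ℂ (A.map φ) := by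
  have hΦ (φ : characterSpace ℂ R) : (CharacterSpace.equivAlgHom φ).mapMatrix
      (algebraMap ℂ _ z - A) = algebraMap ℂ _ z - A.map φ := by
    simp [map_sub]
  simp only [spectrum.mem_iff, isUnit_iff_isUnit_det, ← hΦ, ← AlgHom.map_det, isUnit_iff_ne_zero,
    not_not]
  rw [← spectrum.zero_mem_iff ℂ, CharacterSpace.mem_spectrum_iff_exists]
  simp

theorem spectrum_exp_subset_iUnion_characterSpace (A : Matrix ι ι R) :
    spectrum ℂ (exp A) ⊆ ⋃ φ : characterSpace ℂ R, Complex.exp '' spectrum ℂ (A.map φ) := by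
  intro z hz
  obtain ⟨φ, hφ⟩ := (mem_spectrum_iff_exists_characterSpace _ z).1 hz
  rw [map_exp_characterSpace] at hφ
  exact Set.mem_iUnion.2 ⟨φ, spectrum_exp_subset _ hφ⟩

end Matrix

theorem exponentially_stable_iff_spectrum_re_neg_general
    {R : Type*} [NormedCommRing R] [NormedAlgebra ℂ R] [CompleteSpace R]
    {n : ℕ} (A : Matrix (Fin n) (Fin n) R) :
    (∃ C > (0 : ℝ), ∃ ε > (0 : ℝ), ∀ t : ℝ, 0 ≤ t →
        ‖NormedSpace.exp ((t : ℂ) • A)‖ ≤ C * Real.exp (-ε * t)) ↔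
      (∃ σ < (0 : ℝ), ∀ φ : characterSpace ℂ R,
        ∀ lam ∈ spectrum ℂ (A.map fun x => φ x), lam.re ≤ σ) := by
  change ExponentiallyStable A ↔ _
  constructor
  · intro hA
    obtain ⟨σ, hσ, hre⟩ := hA.exists_re_le
    exact ⟨σ, hσ, fun φ z hz => hre z ((A.mem_spectrum_iff_exists_characterSpace z).2 ⟨φ, hz⟩)⟩
  · rintro ⟨σ, hσ, hre⟩
    refine exponentiallyStable_of_spectralRadius_exp_lt_one ?_
    calc spectralRadius ℂ (exp A) ≤ ENNReal.ofReal (Real.exp σ) := by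
          refine iSup₂_le fun z hz => ?_
          obtain ⟨φ, c, hc, rfl⟩ :=
            Set.mem_iUnion.1 (A.spectrum_exp_subset_iUnion_characterSpace hz)
          rw [← ENNReal.ofReal_coe_nnreal, coe_nnnorm, Complex.norm_exp]
          exact ENNReal.ofReal_le_ofReal (Real.exp_le_exp.2 (hre φ c hc))
      _ < 1 := by simpa using Real.exp_lt_one_iff.2 hσ

/-- For a commutative unital complex semisimple Banach algebra `R` and
`A ∈ R^{n×n}`, `A` is exponentially stable iff the real parts of the eigenvalues of all
the matrices `Â(φ)`, `φ` a character of `R`, are bounded above by a negative constant. -/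
theorem exponentially_stable_iff_spectrum_re_neg
    {R : Type*} [NormedCommRing R] [NormedAlgebra ℂ R] [CompleteSpace R] [Nontrivial R]
    (hss : ∀ x : R, (∀ φ : characterSpace ℂ R, φ x = 0) → x = 0)
    {n : ℕ} (A : Matrix (Fin n) (Fin n) R) :
    (∃ C > (0 : ℝ), ∃ ε > (0 : ℝ), ∀ t : ℝ, 0 ≤ t →
        ‖NormedSpace.exp ((t : ℂ) • A)‖ ≤ C * Real.exp (-ε * t)) ↔
      (∃ σ < (0 : ℝ), ∀ φ : characterSpace ℂ R,
        ∀ lam ∈ spectrum ℂ (A.map fun x => φ x), lam.re ≤ σ) :=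
  exponentially_stable_iff_spectrum_re_neg_general A
end

section
/- Let R be a commutative unital complex Banach algebra and A ∈ R^{n×n}. If A is exponentially stable, i.e., there exist C > 0 and ε > 0 with ‖e^{tA}‖ ≤ C e^{−εt} for all t ≥ 0, then for every character φ of R, all eigenvalues of the complex matrix Â(φ) have real part at most −ε, in particular negative. -/
/-!
A character `φ` acts entrywise as a bounded algebra homomorphism `Mₙ(R) → Mₙ(ℂ)`, and
continuous algebra homomorphisms commute with `exp`, so
`‖exp (t Â(φ))‖ ≤ ‖1‖ ‖exp (t A)‖ ≤ ‖1‖ C e^{-εt}`. By spectral mapping, an eigenvalue `λ` of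
`Â(φ)` gives `e^{tλ}` in the spectrum of `exp (t Â(φ))`, whence `e^{t Re λ} ≲ e^{-εt}` for all
`t ≥ 0`, which forces `Re λ ≤ -ε`.
-/

open WeakDual NormedSpace Filter
open scoped NNReal

attribute [local instance] Matrix.linftyOpNormedRing Matrix.linftyOpNormedAlgebra

theorem Real.le_of_forall_exp_mul_le_mul_exp_mul {a b K : ℝ}
    (h : ∀ t : ℝ, 0 ≤ t → Real.exp (t * a) ≤ K * Real.exp (t * b)) : a ≤ b := by
  by_contra! hba
  have hgrowth : Tendsto (fun t => Real.exp (t * (a - b))) atTop atTop :=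
    Real.tendsto_exp_atTop.comp (tendsto_id.atTop_mul_const (sub_pos.mpr hba))
  obtain ⟨t, ht, hK⟩ := ((eventually_ge_atTop 0).and (hgrowth.eventually_gt_atTop K)).exists
  rw [mul_sub, Real.exp_sub, lt_div_iff₀ (Real.exp_pos _)] at hK
  exact (h t ht).not_gt hK

theorem spectrum.exp_mul_re_le_norm_exp_smul_mul_norm_one {A : Type*} [NormedRing A]
    [NormedAlgebra ℂ A] [CompleteSpace A] {a : A} {z : ℂ} (hz : z ∈ spectrum ℂ a) (t : ℝ) :
    Real.exp (t * z.re) ≤ ‖exp ((t : ℂ) • a)‖ * ‖(1 : A)‖ := by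
  have : Nontrivial A := by
    by_contra h
    rw [not_nontrivial_iff_subsingleton] at h
    rwa [spectrum.of_subsingleton] at hz
  have hmem : (t : ℂ) • z ∈ spectrum ℂ ((t : ℂ) • a) := by
    rw [spectrum.smul_eq_smul _ _ ⟨z, hz⟩]
    exact Set.smul_mem_smul_set hz
  calc Real.exp (t * z.re) = ‖exp ((t : ℂ) • z)‖ := by
        rw [smul_eq_mul, ← Complex.exp_eq_exp_ℂ, Complex.norm_exp, Complex.re_ofReal_mul]
    _ ≤ ‖exp ((t : ℂ) • a)‖ * ‖(1 : A)‖ :=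
        spectrum.norm_le_norm_mul_of_mem (spectrum.exp_mem_exp _ hmem)

namespace Matrix

section LinftyOpNorm

attribute [local instance] Matrix.linftyOpSeminormedAddCommGroup

variable {m n : Type*} [Fintype m] [Fintype n]

theorem linfty_opNNNorm_map_le {α β : Type*} [SeminormedAddCommGroup α]
    [SeminormedAddCommGroup β] {f : α → β} {c : ℝ≥0} (hf : ∀ x, ‖f x‖₊ ≤ c * ‖x‖₊)
    (M : Matrix m n α) : ‖M.map f‖₊ ≤ c * ‖M‖₊ := by
  simp only [linfty_opNNNorm_def, Finset.mul_sup₀, Finset.mul_sum]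
  exact Finset.sup_mono_fun fun i _ => Finset.sum_le_sum fun j _ => hf _

theorem linfty_opNorm_map_algHom_le {𝕜 A F : Type*} [NormedField 𝕜] [NormedRing A]
    [NormedAlgebra 𝕜 A] [CompleteSpace A] [FunLike F A 𝕜] [AlgHomClass F 𝕜 A 𝕜] (f : F)
    (M : Matrix m n A) :
    ‖M.map f‖ ≤ ‖M‖ * ‖(1 : A)‖ := by
  rw [mul_comm]
  exact_mod_cast linfty_opNNNorm_map_le (c := ‖(1 : A)‖₊)
    (fun a => by rw [mul_comm]; exact_mod_cast AlgHom.norm_apply_le_self_mul_norm_one f a) M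

end LinftyOpNorm

theorem map_exp {𝕜 α β : Type*} [RCLike 𝕜] {m : Type*} [Fintype m] [DecidableEq m]
    [NormedRing α] [NormedAlgebra 𝕜 α] [CompleteSpace α] [NormedRing β] [Algebra 𝕜 β]
    (f : α →ₐ[𝕜] β) (hf : Continuous f) (M : Matrix m m α) :
    (exp M).map f = exp (M.map f) :=
  -- The `L∞` operator norm induces the product uniformity, but not reducibly.
  have : @CompleteSpace (Matrix m m α) PseudoMetricSpace.toUniformSpace :=
    (inferInstance : CompleteSpace (m → m → α))
  map_exp_of_mem_ball (𝕂 := 𝕜) f.mapMatrix (continuous_id.matrix_map hf) M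
    ((expSeries_radius_eq_top 𝕜 (Matrix m m α)).symm ▸ edist_lt_top _ _)

end Matrix

theorem spectrum_re_le_of_exponentially_stable_general
    {R : Type*} [NormedCommRing R] [NormedAlgebra ℂ R] [CompleteSpace R]
    {n : ℕ} (A : Matrix (Fin n) (Fin n) R) {C ε : ℝ}
    (hA : ∀ t : ℝ, 0 ≤ t → ‖exp ((t : ℂ) • A)‖ ≤ C * Real.exp (-ε * t)) :
    ∀ φ : characterSpace ℂ R, ∀ lam ∈ spectrum ℂ (A.map fun x => φ x),
      lam.re ≤ -ε := by
  intro φ lam hlam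
  set ψ := CharacterSpace.toAlgHom φ
  have hψ : Continuous ψ := map_continuous φ
  refine Real.le_of_forall_exp_mul_le_mul_exp_mul
    (K := C * ‖(1 : R)‖ * ‖(1 : Matrix (Fin n) (Fin n) ℂ)‖) fun t ht => ?_
  calc Real.exp (t * lam.re)
      ≤ ‖exp ((t : ℂ) • A.map ψ)‖ * ‖(1 : Matrix (Fin n) (Fin n) ℂ)‖ :=
        spectrum.exp_mul_re_le_norm_exp_smul_mul_norm_one hlam t
    _ = ‖(exp ((t : ℂ) • A)).map ψ‖ * ‖(1 : Matrix (Fin n) (Fin n) ℂ)‖ := by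
        rw [Matrix.map_exp ψ hψ, Matrix.map_smul _ _ (map_smul ψ _)]
    _ ≤ ‖exp ((t : ℂ) • A)‖ * ‖(1 : R)‖ * ‖(1 : Matrix (Fin n) (Fin n) ℂ)‖ := by
        gcongr
        exact Matrix.linfty_opNorm_map_algHom_le ψ _
    _ ≤ C * Real.exp (-ε * t) * ‖(1 : R)‖ * ‖(1 : Matrix (Fin n) (Fin n) ℂ)‖ := by
        gcongr
        exact hA t ht
    _ = C * ‖(1 : R)‖ * ‖(1 : Matrix (Fin n) (Fin n) ℂ)‖ * Real.exp (t * -ε) := by ring_nf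

/-- If `A ∈ R^{n×n}` is exponentially stable with rate `ε`, then for every
character `φ` of `R` all eigenvalues of `Â(φ)` have real part at most `−ε` (in
particular negative). -/
theorem spectrum_re_le_of_exponentially_stable
    {R : Type*} [NormedCommRing R] [NormedAlgebra ℂ R] [CompleteSpace R] [Nontrivial R]
    {n : ℕ} (A : Matrix (Fin n) (Fin n) R) {C ε : ℝ} (hC : 0 < C) (hε : 0 < ε)
    (hA : ∀ t : ℝ, 0 ≤ t → ‖exp ((t : ℂ) • A)‖ ≤ C * Real.exp (-ε * t)) :
    ∀ φ : characterSpace ℂ R, ∀ lam ∈ spectrum ℂ (A.map fun x => φ x),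
      lam.re ≤ -ε :=
  spectrum_re_le_of_exponentially_stable_general A hA
end
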